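/- Let h : U → ℝ be a smooth function on an open set U ⊆ ℝ² and define y : U → ℝ³ by y(u,v) = (h_u(u,v), h_v(u,v), c(u,v)) where c(u,v) = ∫₀ᵘ (t₁·h_uu(t₁,v) + v·h_vu(t₁,v)) dt₁ + ∫₀ᵛ t₂·h_vv(0,t₂) dt₂. Then c_u = u·h_uu + v·h_vu and c_v = u·h_uv + v·h_vv, so the Jacobian Dy factors as Dy = Ω·Λᵀ where Ω is the 3×2 matrix with columns (1,0,u)ᵀ and (0,1,v)ᵀ and Λᵀ is the Hessian matrix of h. In particular y is a frontal whose singular set is the zero set of det(Hess h). -/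

import Mathlib

open Matrix

theorem stmt17 (h : ℝ × ℝ → ℝ) (hsm : ContDiff ℝ (⊤ : ℕ∞) h)
    (hu hv huu huv hvu hvv : ℝ × ℝ → ℝ)
    (hhu : ∀ p, hu p = fderiv ℝ h p (1, 0)) (hhv : ∀ p, hv p = fderiv ℝ h p (0, 1))
    (hhuu : ∀ p, huu p = fderiv ℝ hu p (1, 0)) (hhuv : ∀ p, huv p = fderiv ℝ hu p (0, 1))
    (hhvu : ∀ p, hvu p = fderiv ℝ hv p (1, 0)) (hhvv : ∀ p, hvv p = fderiv ℝ hv p (0, 1))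
    (c : ℝ × ℝ → ℝ)
    (hc : ∀ u v : ℝ, c (u, v) =
      (∫ t₁ in (0 : ℝ)..u, (t₁ * huu (t₁, v) + v * hvu (t₁, v))) +
      ∫ t₂ in (0 : ℝ)..v, t₂ * hvv (0, t₂))
    (y : ℝ × ℝ → ℝ × ℝ × ℝ) (hy : ∀ p, y p = (hu p, hv p, c p)) :
    ∀ u v : ℝ,
      deriv (fun s => c (s, v)) u = u * huu (u, v) + v * hvu (u, v) ∧
      deriv (fun s => c (u, s)) v = u * huv (u, v) + v * hvv (u, v) ∧
      (∀ ξ : ℝ × ℝ,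
        let Ω : Matrix (Fin 3) (Fin 2) ℝ := Matrix.of ![![1, 0], ![0, 1], ![u, v]]
        let Hess : Matrix (Fin 2) (Fin 2) ℝ :=
          Matrix.of ![![huu (u, v), huv (u, v)], ![hvu (u, v), hvv (u, v)]]
        let Dyξ := fderiv ℝ y (u, v) ξ
        ![Dyξ.1, Dyξ.2.1, Dyξ.2.2] = (Ω * Hessᵀ).mulVec ![ξ.1, ξ.2]) ∧
      (¬ Function.Injective (fderiv ℝ y (u, v)) ↔
        (Matrix.of ![![huu (u, v), huv (u, v)],
          ![hvu (u, v), hvv (u, v)]] : Matrix (Fin 2) (Fin 2) ℝ).det = 0) := by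
  have hfd1 : ContDiff ℝ (⊤ : ℕ∞) (fderiv ℝ h) := hsm.fderiv_right (by simp)
  have hue : hu = fun p => fderiv ℝ h p (1, 0) := funext hhu
  have hve : hv = fun p => fderiv ℝ h p (0, 1) := funext hhv
  have hu_cd : ContDiff ℝ (⊤ : ℕ∞) hu := by rw [hue]; exact hfd1.clm_apply contDiff_const
  have hv_cd : ContDiff ℝ (⊤ : ℕ∞) hv := by rw [hve]; exact hfd1.clm_apply contDiff_const
  have huu_cd : ContDiff ℝ (⊤ : ℕ∞) huu := by
    rw [funext hhuu]; exact (hu_cd.fderiv_right (by simp)).clm_apply contDiff_const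
  have huv_cd : ContDiff ℝ (⊤ : ℕ∞) huv := by
    rw [funext hhuv]; exact (hu_cd.fderiv_right (by simp)).clm_apply contDiff_const
  have hvu_cd : ContDiff ℝ (⊤ : ℕ∞) hvu := by
    rw [funext hhvu]; exact (hv_cd.fderiv_right (by simp)).clm_apply contDiff_const
  have hvv_cd : ContDiff ℝ (⊤ : ℕ∞) hvv := by
    rw [funext hhvv]; exact (hv_cd.fderiv_right (by simp)).clm_apply contDiff_const
  -- symmetry of second derivatives
  have sym : ∀ p, huv p = hvu p := by
    intro p
    rw [hhuv p, hhvu p, hue, hve]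
    have e1 : fderiv ℝ (fun q => fderiv ℝ h q (1, 0)) p (0, 1)
        = fderiv ℝ (fderiv ℝ h) p (0, 1) (1, 0) := by
      rw [fderiv_clm_apply (hfd1.differentiable (by simp) p) (differentiableAt_const _)]; simp
    have e2 : fderiv ℝ (fun q => fderiv ℝ h q (0, 1)) p (1, 0)
        = fderiv ℝ (fderiv ℝ h) p (1, 0) (0, 1) := by
      rw [fderiv_clm_apply (hfd1.differentiable (by simp) p) (differentiableAt_const _)]; simp
    rw [e1, e2]
    exact second_derivative_symmetric (fun y => (hsm.differentiable (by simp) y).hasFDerivAt)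
      (hfd1.differentiable (by simp) p).hasFDerivAt _ _
  -- partial derivative helpers
  have pd1 : ∀ (f : ℝ × ℝ → ℝ), ContDiff ℝ (⊤ : ℕ∞) f → ∀ (t v : ℝ),
      HasDerivAt (fun s => f (s, v)) (fderiv ℝ f (t, v) (1, 0)) t := by
    intro f hf t v
    exact ((hf.differentiable (by simp) (t, v)).hasFDerivAt.comp_hasDerivAt t
      ((hasDerivAt_id t).prodMk (hasDerivAt_const t v)) :)
  have pd2 : ∀ (f : ℝ × ℝ → ℝ), ContDiff ℝ (⊤ : ℕ∞) f → ∀ (u t : ℝ),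
      HasDerivAt (fun s => f (u, s)) (fderiv ℝ f (u, t) (0, 1)) t := by
    intro f hf u t
    exact ((hf.differentiable (by simp) (u, t)).hasFDerivAt.comp_hasDerivAt t
      ((hasDerivAt_const t u).prodMk (hasDerivAt_id t)) :)
  have pdh1 : ∀ t v : ℝ, HasDerivAt (fun s => h (s, v)) (hu (t, v)) t := by
    intro t v; rw [hhu]; exact pd1 h hsm t v
  have pdh2 : ∀ u t : ℝ, HasDerivAt (fun s => h (u, s)) (hv (u, t)) t := by
    intro u t; rw [hhv]; exact pd2 h hsm u t
  have pdhu1 : ∀ t v : ℝ, HasDerivAt (fun s => hu (s, v)) (huu (t, v)) t := by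
    intro t v; rw [hhuu]; exact pd1 hu hu_cd t v
  have pdhu2 : ∀ u t : ℝ, HasDerivAt (fun s => hu (u, s)) (huv (u, t)) t := by
    intro u t; rw [hhuv]; exact pd2 hu hu_cd u t
  have pdhv1 : ∀ t v : ℝ, HasDerivAt (fun s => hv (s, v)) (hvu (t, v)) t := by
    intro t v; rw [hhvu]; exact pd1 hv hv_cd t v
  have pdhv2 : ∀ u t : ℝ, HasDerivAt (fun s => hv (u, s)) (hvv (u, t)) t := by
    intro u t; rw [hhvv]; exact pd2 hv hv_cd u t
  -- closed form for c
  have ceq : ∀ u v : ℝ, c (u, v) = u * hu (u, v) + v * hv (u, v) - h (u, v) + h (0, 0) := by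
    intro u v
    have I1 : (∫ t in (0 : ℝ)..u, (t * huu (t, v) + v * hvu (t, v)))
        = (u * hu (u, v) + v * hv (u, v) - h (u, v))
          - (0 * hu (0, v) + v * hv (0, v) - h (0, v)) := by
      refine intervalIntegral.integral_eq_sub_of_hasDerivAt
        (f := fun t => t * hu (t, v) + v * hv (t, v) - h (t, v)) ?_ ?_
      · intro t _
        have h1 := ((hasDerivAt_id' (x := t)).mul (pdhu1 t v)).add ((pdhv1 t v).const_mul v)
        have h2 := h1.sub (pdh1 t v)
        refine h2.congr_deriv ?_
        ring
      · apply Continuous.intervalIntegrable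
        exact (continuous_id.mul (huu_cd.continuous.comp
            (continuous_id.prodMk continuous_const))).add
          (continuous_const.mul (hvu_cd.continuous.comp
            (continuous_id.prodMk continuous_const)))
    have I2 : (∫ t in (0 : ℝ)..v, t * hvv (0, t))
        = (v * hv (0, v) - h (0, v)) - (0 * hv (0, 0) - h (0, 0)) := by
      refine intervalIntegral.integral_eq_sub_of_hasDerivAt
        (f := fun t => t * hv (0, t) - h (0, t)) ?_ ?_
      · intro t _
        have h1 := (hasDerivAt_id' (x := t)).mul (pdhv2 0 t)
        have h2 := h1.sub (pdh2 0 t)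
        refine h2.congr_deriv ?_
        ring
      · apply Continuous.intervalIntegrable
        exact continuous_id.mul (hvv_cd.continuous.comp
          (continuous_const.prodMk continuous_id))
    rw [hc u v, I1, I2]; ring
  have c_cd : ContDiff ℝ (⊤ : ℕ∞) c := by
    have hce : c = fun p : ℝ × ℝ => p.1 * hu p + p.2 * hv p - h p + h (0, 0) :=
      funext fun p => by obtain ⟨a, b⟩ := p; exact ceq a b
    rw [hce]
    exact (((contDiff_fst.mul hu_cd).add (contDiff_snd.mul hv_cd)).sub hsm).add contDiff_const
  -- partial derivatives of c
  have cd1 : ∀ u v : ℝ,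
      HasDerivAt (fun s => c (s, v)) (u * huu (u, v) + v * hvu (u, v)) u := by
    intro u v
    have hfun : (fun s => c (s, v))
        = fun s => s * hu (s, v) + v * hv (s, v) - h (s, v) + h (0, 0) :=
      funext fun s => ceq s v
    rw [hfun]
    have h1 := ((hasDerivAt_id' (x := u)).mul (pdhu1 u v)).add ((pdhv1 u v).const_mul v)
    have h2 := (h1.sub (pdh1 u v)).add_const (h (0, 0))
    refine h2.congr_deriv ?_
    ring
  have cd2 : ∀ u v : ℝ,
      HasDerivAt (fun s => c (u, s)) (u * huv (u, v) + v * hvv (u, v)) v := by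
    intro u v
    have hfun : (fun s => c (u, s))
        = fun s => u * hu (u, s) + s * hv (u, s) - h (u, s) + h (0, 0) :=
      funext fun s => ceq u s
    rw [hfun]
    have h1 := ((pdhu2 u v).const_mul u).add ((hasDerivAt_id' (x := v)).mul (pdhv2 u v))
    have h2 := (h1.sub (pdh2 u v)).add_const (h (0, 0))
    refine h2.congr_deriv ?_
    ring
  -- linearity evaluation
  have lin : ∀ (L : ℝ × ℝ →L[ℝ] ℝ) (ξ : ℝ × ℝ), L ξ = ξ.1 * L (1, 0) + ξ.2 * L (0, 1) := by
    intro L ξ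
    have hx : ξ = ξ.1 • ((1 : ℝ), (0 : ℝ)) + ξ.2 • ((0 : ℝ), (1 : ℝ)) := by simp [Prod.ext_iff]
    conv_lhs => rw [hx]
    simp only [map_add, _root_.map_smul, smul_eq_mul]
  intro u v
  have hyD : HasFDerivAt y ((fderiv ℝ hu (u, v)).prod
      ((fderiv ℝ hv (u, v)).prod (fderiv ℝ c (u, v)))) (u, v) := by
    have hyf : y = fun q => (hu q, hv q, c q) := funext hy
    rw [hyf]
    exact (hu_cd.differentiable (by simp) _).hasFDerivAt.prodMk
      (((hv_cd.differentiable (by simp) _).hasFDerivAt).prodMk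
        ((c_cd.differentiable (by simp) _).hasFDerivAt))
  have evhu : ∀ ξ : ℝ × ℝ, fderiv ℝ hu (u, v) ξ = ξ.1 * huu (u, v) + ξ.2 * huv (u, v) := by
    intro ξ; rw [lin, ← hhuu (u, v), ← hhuv (u, v)]
  have evhv : ∀ ξ : ℝ × ℝ, fderiv ℝ hv (u, v) ξ = ξ.1 * hvu (u, v) + ξ.2 * hvv (u, v) := by
    intro ξ; rw [lin, ← hhvu (u, v), ← hhvv (u, v)]
  have cu : fderiv ℝ c (u, v) (1, 0) = u * huu (u, v) + v * hvu (u, v) :=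
    HasDerivAt.unique (pd1 c c_cd u v) (cd1 u v)
  have cv : fderiv ℝ c (u, v) (0, 1) = u * huv (u, v) + v * hvv (u, v) :=
    HasDerivAt.unique (pd2 c c_cd u v) (cd2 u v)
  have evc : ∀ ξ : ℝ × ℝ, fderiv ℝ c (u, v) ξ
      = ξ.1 * (u * huu (u, v) + v * hvu (u, v)) + ξ.2 * (u * huv (u, v) + v * hvv (u, v)) := by
    intro ξ; rw [lin, cu, cv]
  refine ⟨(cd1 u v).deriv, (cd2 u v).deriv, ?_, ?_⟩
  · intro ξ
    show ![(fderiv ℝ y (u, v) ξ).1, (fderiv ℝ y (u, v) ξ).2.1, (fderiv ℝ y (u, v) ξ).2.2]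
      = ((Matrix.of ![![1, 0], ![0, 1], ![u, v]] : Matrix (Fin 3) (Fin 2) ℝ) *
          (Matrix.of ![![huu (u, v), huv (u, v)], ![hvu (u, v), hvv (u, v)]]
            : Matrix (Fin 2) (Fin 2) ℝ)ᵀ).mulVec ![ξ.1, ξ.2]
    rw [hyD.fderiv]
    funext i
    fin_cases i <;>
      simp [Matrix.mulVec, Matrix.mul_apply, dotProduct, Fin.sum_univ_succ,
        evhu, evhv, evc, sym (u, v)] <;> ring
  · have comp : ∀ ξ : ℝ × ℝ, fderiv ℝ y (u, v) ξ = 0 ↔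
        (ξ.1 * huu (u, v) + ξ.2 * huv (u, v) = 0 ∧
         ξ.1 * hvu (u, v) + ξ.2 * hvv (u, v) = 0) := by
      intro ξ
      rw [hyD.fderiv]
      simp only [ContinuousLinearMap.prod_apply, Prod.ext_iff, Prod.fst_zero, Prod.snd_zero,
        evhu ξ, evhv ξ, evc ξ]
      constructor
      · rintro ⟨h1, h2, _⟩; exact ⟨h1, h2⟩
      · rintro ⟨h1, h2⟩
        refine ⟨h1, h2, ?_⟩
        linear_combination u * h1 + v * h2
    have inj_iff : ¬ Function.Injective (fderiv ℝ y (u, v)) ↔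
        ∃ ξ : ℝ × ℝ, ξ ≠ 0 ∧ fderiv ℝ y (u, v) ξ = 0 := by
      constructor
      · intro hni
        rw [Function.not_injective_iff] at hni
        obtain ⟨a, b, hab, hne⟩ := hni
        exact ⟨a - b, sub_ne_zero.mpr hne, by rw [map_sub, hab, sub_self]⟩
      · rintro ⟨ξ, hξ0, hξ⟩ hinj
        exact hξ0 (hinj (by rw [hξ, map_zero]))
    rw [inj_iff, ← Matrix.exists_mulVec_eq_zero_iff]
    constructor
    · rintro ⟨ξ, hξ0, hξ⟩
      obtain ⟨h1, h2⟩ := (comp ξ).mp hξ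
      refine ⟨![ξ.1, ξ.2], ?_, ?_⟩
      · intro h0
        exact hξ0 (Prod.ext_iff.mpr
          ⟨by simpa using congrFun h0 0, by simpa using congrFun h0 1⟩)
      · funext i
        fin_cases i <;>
          simp [Matrix.mulVec, dotProduct, Fin.sum_univ_succ]
        · linear_combination h1
        · linear_combination h2
    · rintro ⟨w, hw0, hw⟩
      refine ⟨(w 0, w 1), ?_, ?_⟩
      · intro h0
        apply hw0
        funext i
        fin_cases i
        · exact congrArg Prod.fst h0
        · exact congrArg Prod.snd h0
      · apply (comp _).mpr
        have e0 := congrFun hw 0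
        have e1 := congrFun hw 1
        simp [Matrix.mulVec, dotProduct, Fin.sum_univ_succ] at e0 e1
        constructor
        · linear_combination e0
        · linear_combination e1
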